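/- Let E ⊆ [0,∞) with 0 an accumulation point of E. Then C_E = R*(Ω_0^E(n)) as elements of [0,∞]. -/

import Mathlib

open Filter Topology Set
open scoped ENNReal

/-- A scaling sequence: strictly positive reals tending to zero. -/
def IsScaling (r : ℕ → ℝ) : Prop := (∀ n, 0 < r n) ∧ Tendsto r atTop (𝓝 0)

/-- A sequence of reals is almost decreasing if it is eventually nonincreasing. -/
def AlmostDecreasing (t : ℕ → ℝ) : Prop := ∀ᶠ n in atTop, t (n + 1) ≤ t n

/-- `τ ∈ Ẽ₀ᵈ`: almost decreasing, values in `E \ {0}`, tending to `0`. -/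
def MemE0d (E : Set ℝ) (t : ℕ → ℝ) : Prop :=
  AlmostDecreasing t ∧ (∀ n, t n ∈ E \ {0}) ∧ Tendsto t atTop (𝓝 0)

/-- `(a,b)` is a connected component of `Int(ℝ⁺ \ E)`: an open interval in `ℝ⁺`
missing `E` that is maximal (among such intervals) with this property. -/
def IsGapComponent (E : Set ℝ) (a b : ℝ) : Prop :=
  0 ≤ a ∧ a < b ∧ Ioo a b ∩ E = ∅ ∧
    ∀ a' b' : ℝ, 0 ≤ a' → a' ≤ a → b ≤ b' → Ioo a' b' ∩ E = ∅ → a' = a ∧ b' = b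

/-- `((aₙ,bₙ))ₙ ∈ Ĩ_Eᵈ`. -/
def MemIE (E : Set ℝ) (a b : ℕ → ℝ) : Prop :=
  (∀ n, IsGapComponent E (a n) (b n)) ∧ AlmostDecreasing a ∧
    Tendsto a atTop (𝓝 0) ∧ Tendsto (fun n => (b n - a n) / b n) atTop (𝓝 1)

/-- `x̃ ≍ ỹ`: there are `c₁, c₂ > 0` with `c₁ xₙ < yₙ < c₂ xₙ` for all `n`. -/
def Asymp (x y : ℕ → ℝ) : Prop :=
  ∃ c₁ c₂ : ℝ, 0 < c₁ ∧ 0 < c₂ ∧ ∀ n, c₁ * x n < y n ∧ y n < c₂ * x n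

/-- `E` is `τ̃`-strongly porous at `0`. -/
def TauStronglyPorous (E : Set ℝ) (t : ℕ → ℝ) : Prop :=
  ∃ a b : ℕ → ℝ, MemIE E a b ∧ Asymp t a

/-- `E` is completely strongly porous at `0`. -/
def CSP (E : Set ℝ) : Prop := ∀ t : ℕ → ℝ, MemE0d E t → TauStronglyPorous E t

/-- `L̃ = ((lₙ,mₙ)) ∈ Ĩ_Eᵈ` is universal. -/
def IsUniversal (E : Set ℝ) (l m : ℕ → ℝ) : Prop :=
  MemIE E l m ∧ ∀ a b : ℕ → ℝ, MemIE E a b →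
    ∃ (N₁ : ℕ) (f : ℕ → ℕ), ∀ n, N₁ ≤ n → a n = l (f n)

/-- `M(L̃) = limsupₙ lₙ/mₙ₊₁`, as an element of `[0,∞]`. -/
noncomputable def Mlim (l m : ℕ → ℝ) : ℝ≥0∞ :=
  limsup (fun n => ENNReal.ofReal (l n / m (n + 1))) atTop

/-- `C(τ̃) = inf{ limsupₙ aₙ/τₙ : ((aₙ,bₙ)) ∈ Ĩ_Eᵈ(τ̃) }` (inf ∅ = ∞). -/
noncomputable def Ctau (E : Set ℝ) (t : ℕ → ℝ) : ℝ≥0∞ :=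
  sInf {c : ℝ≥0∞ | ∃ a b : ℕ → ℝ, MemIE E a b ∧ (∀ᶠ n in atTop, t n ≤ a n) ∧
    c = limsup (fun n => ENNReal.ofReal (a n / t n)) atTop}

/-- `C_E = sup_{τ̃ ∈ Ẽ₀ᵈ} C(τ̃)`. -/
noncomputable def Ctot (E : Set ℝ) : ℝ≥0∞ :=
  ⨆ t ∈ {t : ℕ → ℝ | MemE0d E t}, Ctau E t

/-- A normal scaling sequence for the pointed metric space `(E, |·|, 0)`. -/
def IsNormalE (E : Set ℝ) (r : ℕ → ℝ) : Prop :=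
  IsScaling r ∧ ∃ s : ℕ → ℝ, (∀ n, s n ∈ E) ∧ AlmostDecreasing s ∧
    Tendsto (fun n => s n / r n) atTop (𝓝 1)

/-- `R*(Ω₀ᴱ(n))`: the sup of all limits `limₙ sₙ/rₙ` over normal scaling sequences `r`
for `(E,|·|,0)` and sequences `s` in `E` for which the finite limit exists (sup ∅ = 0). -/
noncomputable def RstarE (E : Set ℝ) : ℝ≥0∞ :=
  sSup {c : ℝ≥0∞ | ∃ (r s : ℕ → ℝ) (L : ℝ), IsNormalE E r ∧ (∀ n, s n ∈ E) ∧
    Tendsto (fun n => s n / r n) atTop (𝓝 L) ∧ c = ENNReal.ofReal L}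

/-- `x̃` and `ỹ` are mutually stable w.r.t. `r̃`. -/
def MutuallyStable {X : Type*} [MetricSpace X] (r : ℕ → ℝ) (x y : ℕ → X) : Prop :=
  ∃ L : ℝ, Tendsto (fun n => dist (x n) (y n) / r n) atTop (𝓝 L)

/-- A family of sequences is self-stable w.r.t. `r̃`. -/
def SelfStable {X : Type*} [MetricSpace X] (r : ℕ → ℝ) (F : Set (ℕ → X)) : Prop :=
  ∀ x ∈ F, ∀ y ∈ F, MutuallyStable r x y

/-- A maximal self-stable family w.r.t. `r̃`. -/
def MaximalSelfStable {X : Type*} [MetricSpace X] (r : ℕ → ℝ) (F : Set (ℕ → X)) : Prop :=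
  SelfStable r F ∧ ∀ z : ℕ → X, z ∈ F ∨ ∃ x ∈ F, ¬ MutuallyStable r x z

/-- A normal scaling sequence for the pointed metric space `(X,d,p)`. -/
def IsNormalX {X : Type*} [MetricSpace X] (p : X) (r : ℕ → ℝ) : Prop :=
  IsScaling r ∧ ∃ x : ℕ → X, AlmostDecreasing (fun n => dist (x n) p) ∧
    Tendsto (fun n => dist (x n) p / r n) atTop (𝓝 1)

/-- `R*(Ω_pˣ(n))`: the sup of all limits `limₙ d(xₙ,p)/rₙ` over normal scaling
sequences `r̃` and sequences `x̃` in `X` for which the finite limit exists (sup ∅ = 0). -/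
noncomputable def RstarX {X : Type*} [MetricSpace X] (p : X) : ℝ≥0∞ :=
  sSup {c : ℝ≥0∞ | ∃ (r : ℕ → ℝ) (x : ℕ → X) (L : ℝ), IsNormalX p r ∧
    Tendsto (fun n => dist (x n) p / r n) atTop (𝓝 L) ∧ c = ENNReal.ofReal L}

/-- `R₊(Ω_pˣ(n))`: the inf of the strictly positive such limits (inf ∅ = ∞). -/
noncomputable def RlowX {X : Type*} [MetricSpace X] (p : X) : ℝ≥0∞ :=
  sInf {c : ℝ≥0∞ | ∃ (r : ℕ → ℝ) (x : ℕ → X) (L : ℝ), IsNormalX p r ∧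
    Tendsto (fun n => dist (x n) p / r n) atTop (𝓝 L) ∧ 0 < L ∧ c = ENNReal.ofReal L}

/-!
Fix `τ̃ ∈ Ẽ₀ᵈ` and a real `L₁` with `R* < L₁`. If points of `E` met the annuli
`[L₁τₙ, Kτₙ]` infinitely often, compactness of `[L₁, K]` would produce a limit ratio
`L ≥ L₁` along a subsequence of `τ̃`, contradicting `L ≤ R*`. So for every `K` the annuli
eventually miss `E`, and the gaps `(sup (E ∩ [0, L₁τₙ]), inf (E ∩ (L₁τₙ, ∞)))` form a sequence
in `Ĩ_Eᵈ(τ̃)` with `aₙ ≤ L₁τₙ`; hence `C(τ̃) ≤ L₁`.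

Conversely, let `sₙ/rₙ → L` with `r̃` normal, and take `τ̃ ∈ Ẽ₀ᵈ` with `τₙ/rₙ → 1`. For a gap
sequence with `τₙ ≤ aₙ`, the point `sₙ ∈ E` cannot lie in `(aₙ, bₙ)`, and `sₙ ≥ bₙ` would
force `aₙ/bₙ ≥ τₙ/sₙ`, which stays away from `0` while `aₙ/bₙ → 0`; so eventually `sₙ ≤ aₙ`
and `limsup aₙ/τₙ ≥ L`.
-/

lemma Filter.Eventually.exists_eventuallyEq_forall {α : Type*} {p : α → Prop} {f : ℕ → α}
    (h : ∀ᶠ n in atTop, p (f n)) : ∃ g : ℕ → α, g =ᶠ[atTop] f ∧ ∀ n, p (g n) := by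
  obtain ⟨N, hN⟩ := eventually_atTop.mp h
  refine ⟨fun n => f (max n N), ?_, fun n => hN _ (le_max_right n N)⟩
  filter_upwards [eventually_ge_atTop N] with n hn
  rw [max_eq_left hn]

lemma tendsto_sub_div_self_iff {α : Type*} {l : Filter α} {a b : α → ℝ} (hb : ∀ n, b n ≠ 0) :
    Tendsto (fun n => (b n - a n) / b n) l (𝓝 1) ↔ Tendsto (fun n => a n / b n) l (𝓝 0) := by
  have h : ∀ n, (b n - a n) / b n = 1 - a n / b n := fun n => by rw [sub_div, div_self (hb n)]
  simp_rw [h]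
  constructor <;> intro h <;> simpa using (tendsto_const_nhds (x := (1 : ℝ))).sub h

namespace AlmostDecreasing

variable {t u : ℕ → ℝ}

lemma exists_antitoneOn (h : AlmostDecreasing t) : ∃ N, AntitoneOn t (Ici N) := by
  obtain ⟨N, hN⟩ := eventually_atTop.mp h
  exact ⟨N, antitoneOn_nat_Ici_of_succ_le hN⟩

lemma comp_strictMono (h : AlmostDecreasing t) {φ : ℕ → ℕ} (hφ : StrictMono φ) :
    AlmostDecreasing (t ∘ φ) := by
  obtain ⟨N, hN⟩ := h.exists_antitoneOn
  filter_upwards [eventually_ge_atTop N] with n hn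
  have hle := hφ.monotone n.le_succ
  exact hN (hn.trans hφ.le_apply) ((hn.trans hφ.le_apply).trans hle) hle

lemma congr (h : AlmostDecreasing t) (htu : t =ᶠ[atTop] u) : AlmostDecreasing u := by
  filter_upwards [h, htu, tendsto_add_atTop_nat 1 htu] with n hn h0 h1
  rwa [← h0, ← h1]

end AlmostDecreasing

namespace IsGapComponent

variable {E : Set ℝ} {a b x : ℝ}

lemma pos_right (h : IsGapComponent E a b) : 0 < b := h.1.trans_lt h.2.1

lemma le_of_mem (h : IsGapComponent E a b) (hx : x ∈ E) (hax : a < x) : b ≤ x := by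
  by_contra! hxb
  exact notMem_empty x (h.2.2.1 ▸ ⟨⟨hax, hxb⟩, hx⟩)

end IsGapComponent

lemma isGapComponent_sSup_sInf {E : Set ℝ} (hE : E ⊆ Ici 0) {c : ℝ}
    (hlo : (E ∩ Iic c).Nonempty) (hhi : (E ∩ Ioi c).Nonempty)
    (hlt : sSup (E ∩ Iic c) < sInf (E ∩ Ioi c)) :
    IsGapComponent E (sSup (E ∩ Iic c)) (sInf (E ∩ Ioi c)) := by
  have hlo_bdd : BddAbove (E ∩ Iic c) := ⟨c, fun x hx => hx.2⟩
  have hhi_bdd : BddBelow (E ∩ Ioi c) := ⟨0, fun x hx => hE hx.1⟩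
  have hsplit : ∀ x ∈ E, x ≤ sSup (E ∩ Iic c) ∨ sInf (E ∩ Ioi c) ≤ x := fun x hx =>
    (le_or_gt x c).imp (fun h => le_csSup hlo_bdd ⟨hx, h⟩) (fun h => csInf_le hhi_bdd ⟨hx, h⟩)
  obtain ⟨y, hy⟩ := hlo
  refine ⟨(hE hy.1).trans (le_csSup hlo_bdd hy), hlt, ?_, ?_⟩
  · refine eq_empty_iff_forall_notMem.2 fun x ⟨⟨hax, hxb⟩, hx⟩ => ?_
    exact (hsplit x hx).elim hax.not_ge hxb.not_ge
  · intro a' b' _ ha' hb' hgap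
    have hgap' := eq_empty_iff_forall_notMem.1 hgap
    constructor
    · by_contra hne
      obtain ⟨e, he, hae⟩ := exists_lt_of_lt_csSup ⟨y, hy⟩ (ha'.lt_of_ne hne)
      exact hgap' e ⟨⟨hae, ((le_csSup hlo_bdd he).trans_lt hlt).trans_le hb'⟩, he.1⟩
    · by_contra hne
      obtain ⟨e, he, heb⟩ := exists_lt_of_csInf_lt hhi (hb'.lt_of_ne' hne)
      exact hgap' e ⟨⟨ha'.trans_lt ((csSup_le ⟨y, hy⟩ fun x hx => hx.2).trans_lt he.2), heb⟩, he.1⟩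

lemma exists_memIE_of_eventually {E : Set ℝ} {A B : ℕ → ℝ}
    (hgap : ∀ᶠ n in atTop, IsGapComponent E (A n) (B n)) (hdec : AlmostDecreasing A)
    (hA : Tendsto A atTop (𝓝 0)) (hAB : Tendsto (fun n => A n / B n) atTop (𝓝 0)) :
    ∃ a b : ℕ → ℝ, MemIE E a b ∧ a =ᶠ[atTop] A := by
  obtain ⟨g, hg, hgap'⟩ := Eventually.exists_eventuallyEq_forall
    (p := fun x : ℝ × ℝ => IsGapComponent E x.1 x.2) (f := fun n => (A n, B n)) hgap
  have ha : (fun n => (g n).1) =ᶠ[atTop] A := hg.fun_comp Prod.fst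
  have hb : (fun n => (g n).2) =ᶠ[atTop] B := hg.fun_comp Prod.snd
  refine ⟨_, _, ⟨hgap', hdec.congr ha.symm, hA.congr' ha.symm, ?_⟩, ha⟩
  rw [tendsto_sub_div_self_iff fun n => (hgap' n).pos_right.ne']
  exact hAB.congr' (ha.symm.div hb.symm)

lemma MemIE.eventually_le_of_mem {E : Set ℝ} {a b s τ : ℕ → ℝ} (hab : MemIE E a b)
    (hs : ∀ n, s n ∈ E) (hτa : ∀ᶠ n in atTop, τ n ≤ a n) {C : ℝ} (hC : 0 < C)
    (hsC : ∀ᶠ n in atTop, s n ≤ C * τ n) : ∀ᶠ n in atTop, s n ≤ a n := by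
  have hb n : 0 < b n := (hab.1 n).pos_right
  have hab0 := (tendsto_sub_div_self_iff fun n => (hb n).ne').1 hab.2.2.2
  filter_upwards [hτa, hsC, hab0.eventually_lt_const (inv_pos.2 hC)] with n hτn hsn hn
  by_contra! has
  have hbC : b n ≤ C * a n :=
    ((hab.1 n).le_of_mem (hs n) has).trans (hsn.trans (mul_le_mul_of_nonneg_left hτn hC.le))
  rw [div_lt_iff₀ (hb n), inv_mul_eq_div, lt_div_iff₀ hC] at hn
  linarith

lemma ofReal_le_ctau {E : Set ℝ} {τ s : ℕ → ℝ} (hτ : ∀ n, 0 < τ n) (hs : ∀ n, s n ∈ E)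
    {L : ℝ} (hL : Tendsto (fun n => s n / τ n) atTop (𝓝 L)) :
    ENNReal.ofReal L ≤ Ctau E τ := by
  refine le_sInf ?_
  rintro _ ⟨a, b, hab, hτa, rfl⟩
  have hsC : ∀ᶠ n in atTop, s n ≤ (|L| + 1) * τ n := by
    filter_upwards [hL.eventually_lt_const ((le_abs_self L).trans_lt (lt_add_one _))] with n hn
    exact (div_le_iff₀ (hτ n)).1 hn.le
  have hsa := hab.eventually_le_of_mem hs hτa (by positivity) hsC
  calc ENNReal.ofReal L = limsup (fun n => ENNReal.ofReal (s n / τ n)) atTop :=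
        (ENNReal.tendsto_ofReal hL).limsup_eq.symm
    _ ≤ _ := limsup_le_limsup (hsa.mono fun n h =>
        ENNReal.ofReal_le_ofReal (div_le_div_of_nonneg_right h (hτ n).le))

lemma ofReal_le_rstarE {E : Set ℝ} {r s : ℕ → ℝ} {L : ℝ} (hr : IsNormalE E r)
    (hs : ∀ n, s n ∈ E) (hL : Tendsto (fun n => s n / r n) atTop (𝓝 L)) :
    ENNReal.ofReal L ≤ RstarE E :=
  le_sSup ⟨r, s, L, hr, hs, hL, rfl⟩

lemma IsNormalE.exists_memE0d {E : Set ℝ} {r : ℕ → ℝ} (hr : IsNormalE E r) :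
    ∃ τ, MemE0d E τ ∧ Tendsto (fun n => τ n / r n) atTop (𝓝 1) := by
  obtain ⟨⟨hrpos, hr0⟩, s, hsE, hsdec, hsr⟩ := hr
  have hs : ∀ᶠ n in atTop, s n ∈ E \ {0} := by
    filter_upwards [hsr.eventually_const_lt one_pos] with n hn
    exact ⟨hsE n, ((div_pos_iff_of_pos_right (hrpos n)).1 hn).ne'⟩
  obtain ⟨τ, hτs, hτE⟩ := hs.exists_eventuallyEq_forall
  have hτr : Tendsto (fun n => τ n / r n) atTop (𝓝 1) :=
    hsr.congr' (hτs.symm.div EventuallyEq.rfl)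
  have hτ0 : Tendsto τ atTop (𝓝 0) := by
    simpa using (hτr.mul hr0).congr fun n => div_mul_cancel₀ (τ n) (hrpos n).ne'
  exact ⟨τ, ⟨hsdec.congr hτs.symm, hτE, hτ0⟩, hτr⟩

namespace MemE0d

variable {E : Set ℝ} {τ : ℕ → ℝ}

lemma mem (h : MemE0d E τ) (n : ℕ) : τ n ∈ E := (h.2.1 n).1

lemma pos (hE : E ⊆ Ici 0) (h : MemE0d E τ) (n : ℕ) : 0 < τ n :=
  (hE (h.mem n)).lt_of_ne' (h.2.1 n).2

lemma comp_strictMono (h : MemE0d E τ) {φ : ℕ → ℕ} (hφ : StrictMono φ) : MemE0d E (τ ∘ φ) :=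
  ⟨h.1.comp_strictMono hφ, fun n => h.2.1 (φ n), h.2.2.comp hφ.tendsto_atTop⟩

lemma isNormalE (hE : E ⊆ Ici 0) (h : MemE0d E τ) : IsNormalE E τ :=
  ⟨⟨h.pos hE, h.2.2⟩, τ, h.mem, h.1,
    tendsto_const_nhds.congr fun n => (div_self (h.pos hE n).ne').symm⟩

lemma one_le_rstarE (hE : E ⊆ Ici 0) (h : MemE0d E τ) : 1 ≤ RstarE E := by
  simpa using ofReal_le_rstarE (h.isNormalE hE) h.mem
    (tendsto_const_nhds.congr fun n => (div_self (h.pos hE n).ne').symm)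

lemma eventually_notMem_Icc (hE : E ⊆ Ici 0) (h : MemE0d E τ) {L₁ : ℝ}
    (hR : RstarE E < ENNReal.ofReal L₁) (K : ℝ) :
    ∀ᶠ n in atTop, ∀ x ∈ E, x ∉ Icc (L₁ * τ n) (K * τ n) := by
  by_contra hfreq
  simp only [not_eventually, not_forall, not_not] at hfreq
  obtain ⟨φ, hφ, hx⟩ := extraction_of_frequently_atTop hfreq
  choose x hxE hxI using hx
  have hratio n : x n / τ (φ n) ∈ Icc L₁ K :=
    ⟨(le_div_iff₀ (h.pos hE _)).2 (hxI n).1, (div_le_iff₀ (h.pos hE _)).2 (hxI n).2⟩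
  obtain ⟨L, hL, ψ, hψ, hlim⟩ := isCompact_Icc.tendsto_subseq hratio
  have hLR : ENNReal.ofReal L ≤ RstarE E :=
    ofReal_le_rstarE ((h.comp_strictMono (hφ.comp hψ)).isNormalE hE) (fun n => hxE (ψ n)) hlim
  exact (hR.trans_le (ENNReal.ofReal_le_ofReal hL.1)).not_ge hLR

lemma eventually_nonempty_inter_Ioi (hE : E ⊆ Ici 0) (h : MemE0d E τ) (c : ℝ) :
    ∀ᶠ n in atTop, (E ∩ Ioi (c * τ n)).Nonempty := by
  have hcτ : Tendsto (fun n => c * τ n) atTop (𝓝 0) := by simpa using h.2.2.const_mul c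
  filter_upwards [hcτ.eventually_lt_const (h.pos hE 0)] with n hn using ⟨τ 0, h.mem 0, hn⟩

lemma tendsto_sInf_inter_Ioi_div_atTop (hE : E ⊆ Ici 0) (h : MemE0d E τ) {L₁ : ℝ}
    (hR : RstarE E < ENNReal.ofReal L₁) :
    Tendsto (fun n => sInf (E ∩ Ioi (L₁ * τ n)) / τ n) atTop atTop := by
  refine tendsto_atTop.2 fun K => ?_
  filter_upwards [h.eventually_nonempty_inter_Ioi hE L₁, h.eventually_notMem_Icc hE hR K]
    with n hne hgap
  rw [le_div_iff₀ (h.pos hE n)]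
  refine le_csInf hne fun x hx => ?_
  by_contra! hxK
  exact hgap x hx.1 ⟨hx.2.le, hxK.le⟩

lemma exists_memIE_le_mul (hE : E ⊆ Ici 0) (h : MemE0d E τ) {L₁ : ℝ}
    (hR : RstarE E < ENNReal.ofReal L₁) :
    ∃ a b : ℕ → ℝ, MemIE E a b ∧ ∀ᶠ n in atTop, τ n ≤ a n ∧ a n ≤ L₁ * τ n := by
  have hτ := h.pos hE
  have hL₁ : 1 ≤ L₁ := (ENNReal.one_lt_ofReal.1 ((h.one_le_rstarE hE).trans_lt hR)).le
  set A : ℕ → ℝ := fun n => sSup (E ∩ Iic (L₁ * τ n))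
  set B : ℕ → ℝ := fun n => sInf (E ∩ Ioi (L₁ * τ n))
  have hτmem n : τ n ∈ E ∩ Iic (L₁ * τ n) := ⟨h.mem n, le_mul_of_one_le_left (hτ n).le hL₁⟩
  have hτA n : τ n ≤ A n := le_csSup ⟨_, fun x hx => hx.2⟩ (hτmem n)
  have hAL n : A n ≤ L₁ * τ n := csSup_le ⟨_, hτmem n⟩ fun x hx => hx.2
  have hBτ : Tendsto (fun n => B n / τ n) atTop atTop := h.tendsto_sInf_inter_Ioi_div_atTop hE hR
  have hB : ∀ᶠ n in atTop, 0 < B n := by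
    filter_upwards [hBτ.eventually_gt_atTop 0] with n hn
    exact (div_pos_iff_of_pos_right (hτ n)).1 hn
  have hAB : Tendsto (fun n => A n / B n) atTop (𝓝 0) := by
    refine squeeze_zero' ?_ ?_ (tendsto_const_nhds (x := L₁).div_atTop hBτ)
    · filter_upwards [hB] with n hBn
      exact div_nonneg ((hτ n).le.trans (hτA n)) hBn.le
    · filter_upwards [hB] with n hBn
      rw [div_div_eq_mul_div]
      exact div_le_div_of_nonneg_right (hAL n) hBn.le
  have hgap : ∀ᶠ n in atTop, IsGapComponent E (A n) (B n) := by
    filter_upwards [h.eventually_nonempty_inter_Ioi hE L₁, hBτ.eventually_gt_atTop L₁]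
      with n hne hn
    refine isGapComponent_sSup_sInf hE ⟨_, hτmem n⟩ hne ((hAL n).trans_lt ?_)
    rwa [lt_div_iff₀ (hτ n)] at hn
  have hdec : AlmostDecreasing A := by
    filter_upwards [h.1] with n hn
    exact csSup_le_csSup ⟨_, fun x hx => hx.2⟩ ⟨_, hτmem (n + 1)⟩
      (inter_subset_inter_right _ (Iic_subset_Iic.2 (by gcongr)))
  have hA0 : Tendsto A atTop (𝓝 0) :=
    squeeze_zero (fun n => (hτ n).le.trans (hτA n)) hAL (by simpa using h.2.2.const_mul L₁)
  obtain ⟨a, b, hab, haA⟩ := exists_memIE_of_eventually hgap hdec hA0 hAB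
  exact ⟨a, b, hab, haA.mono fun n hn => hn ▸ ⟨hτA n, hAL n⟩⟩

lemma ctau_le_rstarE (hE : E ⊆ Ici 0) (h : MemE0d E τ) : Ctau E τ ≤ RstarE E := by
  refine le_of_forall_gt_imp_ge_of_dense fun c hc => ?_
  rcases eq_or_ne c ⊤ with rfl | hc_top
  · exact le_top
  rw [← ENNReal.ofReal_toReal hc_top] at hc ⊢
  obtain ⟨a, b, hab, hτa⟩ := h.exists_memIE_le_mul hE hc
  refine sInf_le_of_le ⟨a, b, hab, hτa.mono fun n hn => hn.1, rfl⟩ (limsup_le_of_le ?_ ?_)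
  · isBoundedDefault
  filter_upwards [hτa] with n hn
  exact ENNReal.ofReal_le_ofReal ((div_le_iff₀ (h.pos hE n)).2 hn.2)

end MemE0d

lemma rstarE_le_ctot {E : Set ℝ} (hE : E ⊆ Ici 0) : RstarE E ≤ Ctot E := by
  refine sSup_le ?_
  rintro _ ⟨r, s, L, hr, hs, hsr, rfl⟩
  obtain ⟨τ, hτ, hτr⟩ := hr.exists_memE0d
  have hsτ : Tendsto (fun n => s n / τ n) atTop (𝓝 L) := by
    simpa using (hsr.div hτr one_ne_zero).congr fun n =>
      div_div_div_cancel_right₀ (hr.1.1 n).ne' (s n) (τ n)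
  exact (ofReal_le_ctau (hτ.pos hE) hs hsτ).trans (le_biSup (Ctau E) hτ)

theorem stmt9_general (E : Set ℝ) (hE : E ⊆ Ici 0) :
    Ctot E = RstarE E :=
  le_antisymm (iSup₂_le fun _ hτ => hτ.ctau_le_rstarE hE) (rstarE_le_ctot hE)

/-- Proposition 4.6, `C_E = R*(Ω₀ᴱ(n))`. -/
theorem stmt9 (E : Set ℝ) (hE : E ⊆ Ici 0) (hacc : (0 : ℝ) ∈ closure (E \ {0})) :
    Ctot E = RstarE E :=
  stmt9_general E hE
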